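/- arXiv:math/0407510 — 2 statements merged into one kernel-verified Lean document; each statement's English description precedes it below -/
import Mathlib

section
/- If H is a quasi-bialgebra and F ∈ H⊗H is a gauge transformation (invertible with (ε⊗id)(F) = (id⊗ε)(F) = 1), then H_F, defined by keeping the multiplication, unit and counit of H but setting Δ_F(h) = FΔ(h)F⁻¹ and Φ_F = (1⊗F)(id⊗Δ)(F)Φ(Δ⊗id)(F⁻¹)(F⁻¹⊗1), is again a quasi-bialgebra. -/
open TensorProduct

noncomputable section

namespace QuasiHopfPaper

variable (k : Type) [Field k]
variable (H : Type) [Ring H] [Algebra k H]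

/-- A quasi-bialgebra in the sense of Drinfeld. -/
structure QuasiBialgebra where
  comul : H →ₐ[k] H ⊗[k] H
  counit : H →ₐ[k] k
  Phi : H ⊗[k] (H ⊗[k] H)
  PhiInv : H ⊗[k] (H ⊗[k] H)
  Phi_inv_mul : Phi * PhiInv = 1
  inv_Phi_mul : PhiInv * Phi = 1
  quasi_coassoc : ∀ h : H,
    Algebra.TensorProduct.map (AlgHom.id k H) comul (comul h)
      = Phi * (Algebra.TensorProduct.assoc k k k H H H)
          (Algebra.TensorProduct.map comul (AlgHom.id k H) (comul h)) * PhiInv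
  counit_right : ∀ h : H,
    (Algebra.TensorProduct.rid k k H)
      (Algebra.TensorProduct.map (AlgHom.id k H) counit (comul h)) = h
  counit_left : ∀ h : H,
    (Algebra.TensorProduct.lid k H)
      (Algebra.TensorProduct.map counit (AlgHom.id k H) (comul h)) = h
  cocycle :
    (Algebra.TensorProduct.includeRight (R := k) (A := H)
        (B := H ⊗[k] (H ⊗[k] H)) Phi)
      * (Algebra.TensorProduct.map (AlgHom.id k H)
          ((Algebra.TensorProduct.assoc k k k H H H).toAlgHom.comp
            (Algebra.TensorProduct.map comul (AlgHom.id k H))) Phi)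
      * ((Algebra.TensorProduct.map (AlgHom.id k H)
            (Algebra.TensorProduct.assoc k k k H H H).toAlgHom)
          ((Algebra.TensorProduct.assoc k k k H (H ⊗[k] H) H) (Phi ⊗ₜ[k] (1 : H))))
    = (Algebra.TensorProduct.map (AlgHom.id k H)
          (Algebra.TensorProduct.map (AlgHom.id k H) comul) Phi)
      * ((Algebra.TensorProduct.assoc k k k H H (H ⊗[k] H))
          (Algebra.TensorProduct.map comul (AlgHom.id k (H ⊗[k] H)) Phi))
  normalized :
    Algebra.TensorProduct.map (AlgHom.id k H)
      ((Algebra.TensorProduct.lid k H).toAlgHom.comp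
        (Algebra.TensorProduct.map counit (AlgHom.id k H))) Phi = 1

variable {k H}

/-- The quasi-Hopf antipode axioms for `(S, α, β)` over a quasi-bialgebra. -/
structure IsAntipode (Q : QuasiBialgebra k H) (S : H →ₗ[k] H) (α β : H) : Prop where
  anti_mul : ∀ a b : H, S (a * b) = S b * S a
  map_one : S 1 = 1
  bijective : Function.Bijective S
  left_id : ∀ h : H,
    LinearMap.mul' k H
      (TensorProduct.map S (LinearMap.mulLeft k α) (Q.comul h)) = Q.counit h • α
  right_id : ∀ h : H,
    LinearMap.mul' k H
      (TensorProduct.map (LinearMap.mulRight k β) S (Q.comul h)) = Q.counit h • β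
  phi_id :
    LinearMap.mul' k H
      (TensorProduct.map (LinearMap.mulRight k β)
        ((LinearMap.mul' k H).comp (TensorProduct.map S (LinearMap.mulLeft k α)))
        Q.Phi) = 1
  phiInv_id :
    LinearMap.mul' k H
      (TensorProduct.map ((LinearMap.mulRight k α).comp S)
        ((LinearMap.mul' k H).comp
          (TensorProduct.map LinearMap.id ((LinearMap.mulLeft k β).comp S)))
        Q.PhiInv) = 1


variable (Q : QuasiBialgebra k H)

set_option maxHeartbeats 1000000

/-- doc -/
structure LeftComoduleAlgebra (B : Type) [Ring B] [Algebra k B] where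
  lambda : B →ₐ[k] H ⊗[k] B
  Phi : H ⊗[k] (H ⊗[k] B)
  PhiInv : H ⊗[k] (H ⊗[k] B)
  Phi_inv_mul : Phi * PhiInv = 1
  inv_Phi_mul : PhiInv * Phi = 1
  coassoc : ∀ b : B,
    Algebra.TensorProduct.map (AlgHom.id k H) lambda (lambda b) * Phi
      = Phi * (Algebra.TensorProduct.assoc k k k H H B)
          (Algebra.TensorProduct.map Q.comul (AlgHom.id k B) (lambda b))
  pentagon :
    (Algebra.TensorProduct.includeRight (R := k) (A := H)
        (B := H ⊗[k] (H ⊗[k] B)) Phi)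
      * (Algebra.TensorProduct.map (AlgHom.id k H)
          ((Algebra.TensorProduct.assoc k k k H H B).toAlgHom.comp
            (Algebra.TensorProduct.map Q.comul (AlgHom.id k B))) Phi)
      * ((Algebra.TensorProduct.map (AlgHom.id k H)
            (Algebra.TensorProduct.assoc k k k H H B).toAlgHom)
          ((Algebra.TensorProduct.assoc k k k H (H ⊗[k] H) B) (Q.Phi ⊗ₜ[k] (1 : B))))
    = (Algebra.TensorProduct.map (AlgHom.id k H)
          (Algebra.TensorProduct.map (AlgHom.id k H) lambda) Phi)
      * ((Algebra.TensorProduct.assoc k k k H H (H ⊗[k] B))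
          (Algebra.TensorProduct.map Q.comul (AlgHom.id k (H ⊗[k] B)) Phi))
  counit_lambda : ∀ b : B,
    (Algebra.TensorProduct.lid k B)
      (Algebra.TensorProduct.map Q.counit (AlgHom.id k B) (lambda b)) = b
  normal_mid :
    Algebra.TensorProduct.map (AlgHom.id k H)
      ((Algebra.TensorProduct.lid k B).toAlgHom.comp
        (Algebra.TensorProduct.map Q.counit (AlgHom.id k B))) Phi = 1
  normal_left :
    (Algebra.TensorProduct.lid k (H ⊗[k] B))
      (Algebra.TensorProduct.map Q.counit (AlgHom.id k (H ⊗[k] B)) Phi) = 1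

/-- A right `H`-comodule algebra over a quasi-bialgebra (Hausser–Nill). -/
structure RightComoduleAlgebra (A : Type) [Ring A] [Algebra k A] where
  rho : A →ₐ[k] A ⊗[k] H
  Phi : A ⊗[k] (H ⊗[k] H)
  PhiInv : A ⊗[k] (H ⊗[k] H)
  Phi_inv_mul : Phi * PhiInv = 1
  inv_Phi_mul : PhiInv * Phi = 1
  coassoc : ∀ a : A,
    Phi * (Algebra.TensorProduct.assoc k k k A H H)
        (Algebra.TensorProduct.map rho (AlgHom.id k H) (rho a))
      = Algebra.TensorProduct.map (AlgHom.id k A) Q.comul (rho a) * Phi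
  pentagon :
    (Algebra.TensorProduct.includeRight (R := k) (A := A)
        (B := H ⊗[k] (H ⊗[k] H)) Q.Phi)
      * (Algebra.TensorProduct.map (AlgHom.id k A)
          ((Algebra.TensorProduct.assoc k k k H H H).toAlgHom.comp
            (Algebra.TensorProduct.map Q.comul (AlgHom.id k H))) Phi)
      * ((Algebra.TensorProduct.map (AlgHom.id k A)
            (Algebra.TensorProduct.assoc k k k H H H).toAlgHom)
          ((Algebra.TensorProduct.assoc k k k A (H ⊗[k] H) H) (Phi ⊗ₜ[k] (1 : H))))
    = (Algebra.TensorProduct.map (AlgHom.id k A)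
          (Algebra.TensorProduct.map (AlgHom.id k H) Q.comul) Phi)
      * ((Algebra.TensorProduct.assoc k k k A H (H ⊗[k] H))
          (Algebra.TensorProduct.map rho (AlgHom.id k (H ⊗[k] H)) Phi))
  counit_rho : ∀ a : A,
    (Algebra.TensorProduct.rid k k A)
      (Algebra.TensorProduct.map (AlgHom.id k A) Q.counit (rho a)) = a
  normal_mid :
    Algebra.TensorProduct.map (AlgHom.id k A)
      ((Algebra.TensorProduct.lid k H).toAlgHom.comp
        (Algebra.TensorProduct.map Q.counit (AlgHom.id k H))) Phi = 1
  normal_right :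
    Algebra.TensorProduct.map (AlgHom.id k A)
      ((Algebra.TensorProduct.rid k k H).toAlgHom.comp
        (Algebra.TensorProduct.map (AlgHom.id k H) Q.counit)) Phi = 1


section Helpers

variable {M N P Q' : Type} [AddCommGroup M] [AddCommGroup N] [AddCommGroup P]
  [AddCommGroup Q'] [Module k M] [Module k N] [Module k P] [Module k Q']

/-- Componentwise action of `M ⊗ N` on `P ⊗ Q'` coming from actions of the factors. -/
def endTensor (f : M →ₗ[k] P →ₗ[k] P) (g : N →ₗ[k] Q' →ₗ[k] Q') :
    M ⊗[k] N →ₗ[k] (P ⊗[k] Q') →ₗ[k] (P ⊗[k] Q') :=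
  (TensorProduct.homTensorHomMap (RingHom.id k) P Q' P Q').comp (TensorProduct.map f g)

end Helpers

/-- A right `H`-module coalgebra: a coalgebra in the monoidal category `M_H`. -/
structure RightModuleCoalgebra (C : Type) [AddCommGroup C] [Module k C] where
  ract : C →ₗ[k] H →ₗ[k] C
  ract_one : ∀ c : C, ract c 1 = c
  ract_mul : ∀ (c : C) (h h' : H), ract (ract c h) h' = ract c (h * h')
  comul : C →ₗ[k] C ⊗[k] C
  counit : C →ₗ[k] k
  quasi_coassoc : ∀ c : C,
    (endTensor ract.flip (endTensor ract.flip ract.flip) Q.PhiInv)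
        ((TensorProduct.assoc k C C C)
          (TensorProduct.map comul LinearMap.id (comul c)))
      = TensorProduct.map LinearMap.id comul (comul c)
  comul_ract : ∀ (c : C) (h : H),
    comul (ract c h) = (endTensor ract.flip ract.flip) (Q.comul h) (comul c)
  counit_ract : ∀ (c : C) (h : H), counit (ract c h) = counit c * Q.counit h
  counit_comul_left : ∀ c : C,
    (TensorProduct.lid k C) (TensorProduct.map counit LinearMap.id (comul c)) = c
  counit_comul_right : ∀ c : C,
    (TensorProduct.rid k C) (TensorProduct.map LinearMap.id counit (comul c)) = c

/-- A left `H`-module algebra: an algebra in the monoidal category `_H M`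
(the multiplication is only quasi-associative). -/
structure LeftModuleAlgebra (A : Type) [AddCommGroup A] [Module k A] where
  act : H →ₗ[k] A →ₗ[k] A
  act_one : ∀ a : A, act 1 a = a
  act_mul : ∀ (h h' : H) (a : A), act (h * h') a = act h (act h' a)
  mul : A →ₗ[k] A →ₗ[k] A
  one : A
  one_mul : ∀ a : A, mul one a = a
  mul_one : ∀ a : A, mul a one = a
  quasi_assoc : ∀ a a' a'' : A,
    mul (mul a a') a''
      = TensorProduct.lift mul
          ((TensorProduct.map LinearMap.id (TensorProduct.lift mul))
            ((endTensor act (endTensor act act) Q.Phi) (a ⊗ₜ[k] (a' ⊗ₜ[k] a''))))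
  act_mul_distrib : ∀ (h : H) (a a' : A),
    act h (mul a a')
      = TensorProduct.lift mul ((endTensor act act (Q.comul h)) (a ⊗ₜ[k] a'))
  act_one_elem : ∀ h : H, act h one = Q.counit h • one


section Smash

variable {A : Type} [AddCommGroup A] [Module k A]
variable {B : Type} [Ring B] [Algebra k B]

/-- The generalized smash product multiplication `A ▶< B`:
`(a ▶< b)(a' ▶< b') = (x̃¹·a)(x̃² b₋₁ · a') ▶< x̃³ b₀ b'`, built from the
`H`-action `actA` and multiplication `mulA` on `A`, the coaction `lam` on `B`
and the (inverse) reassociator `phiInv` of the comodule algebra `B`. -/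
def smashMul (mulA : A →ₗ[k] A →ₗ[k] A) (actA : H →ₗ[k] A →ₗ[k] A)
    (lam : B →ₗ[k] H ⊗[k] B) (phiInv : H ⊗[k] (H ⊗[k] B)) :
    (A ⊗[k] B) →ₗ[k] (A ⊗[k] B) →ₗ[k] (A ⊗[k] B) :=
  let aAct : H ⊗[k] A →ₗ[k] A := TensorProduct.lift actA
  let mA : A ⊗[k] A →ₗ[k] A := TensorProduct.lift mulA
  let mH : H ⊗[k] H →ₗ[k] H := LinearMap.mul' k H
  let mB : B ⊗[k] B →ₗ[k] B := LinearMap.mul' k B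
  let f : ((H ⊗[k] A) ⊗[k] ((H ⊗[k] H) ⊗[k] A)) →ₗ[k] A :=
    mA ∘ₗ TensorProduct.map aAct (aAct ∘ₗ TensorProduct.map mH LinearMap.id)
  let g : (B ⊗[k] (B ⊗[k] B)) →ₗ[k] B := mB ∘ₗ TensorProduct.map LinearMap.id mB
  let r : (B ⊗[k] ((H ⊗[k] B) ⊗[k] B)) →ₗ[k] (H ⊗[k] (B ⊗[k] (B ⊗[k] B))) :=
    (TensorProduct.assoc k H B (B ⊗[k] B)).toLinearMap
      ∘ₗ TensorProduct.map (TensorProduct.comm k B H).toLinearMap LinearMap.id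
      ∘ₗ (TensorProduct.assoc k B H (B ⊗[k] B)).symm.toLinearMap
      ∘ₗ TensorProduct.map LinearMap.id (TensorProduct.assoc k H B B).toLinearMap
  let j2 : ((H ⊗[k] A) ⊗[k] H) →ₗ[k] ((H ⊗[k] H) ⊗[k] A) :=
    (TensorProduct.assoc k H H A).symm.toLinearMap
      ∘ₗ TensorProduct.map LinearMap.id (TensorProduct.comm k A H).toLinearMap
      ∘ₗ (TensorProduct.assoc k H A H).toLinearMap
  let j : (((H ⊗[k] A) ⊗[k] (H ⊗[k] A)) ⊗[k] H) →ₗ[k]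
      ((H ⊗[k] A) ⊗[k] ((H ⊗[k] H) ⊗[k] A)) :=
    TensorProduct.map LinearMap.id j2
      ∘ₗ (TensorProduct.assoc k (H ⊗[k] A) (H ⊗[k] A) H).toLinearMap
  let σ : ((H ⊗[k] (H ⊗[k] B)) ⊗[k] ((A ⊗[k] (H ⊗[k] B)) ⊗[k] (A ⊗[k] B))) →ₗ[k]
      (((H ⊗[k] A) ⊗[k] ((H ⊗[k] H) ⊗[k] A)) ⊗[k] (B ⊗[k] (B ⊗[k] B))) :=
    TensorProduct.map j LinearMap.id
      ∘ₗ (TensorProduct.assoc k ((H ⊗[k] A) ⊗[k] (H ⊗[k] A)) H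
            (B ⊗[k] (B ⊗[k] B))).symm.toLinearMap
      ∘ₗ TensorProduct.map (TensorProduct.tensorTensorTensorComm k H H A A).toLinearMap r
      ∘ₗ (TensorProduct.tensorTensorTensorComm k (H ⊗[k] H) B (A ⊗[k] A)
            ((H ⊗[k] B) ⊗[k] B)).toLinearMap
      ∘ₗ TensorProduct.map (TensorProduct.assoc k H H B).symm.toLinearMap
          (TensorProduct.tensorTensorTensorComm k A (H ⊗[k] B) A B).toLinearMap
  let pre : ((A ⊗[k] B) ⊗[k] (A ⊗[k] B)) →ₗ[k]
      ((A ⊗[k] (H ⊗[k] B)) ⊗[k] (A ⊗[k] B)) :=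
    TensorProduct.map (TensorProduct.map LinearMap.id lam) LinearMap.id
  (TensorProduct.lift.equiv (RingHom.id k) (A ⊗[k] B) (A ⊗[k] B) (A ⊗[k] B)).symm
    (TensorProduct.map f g ∘ₗ σ
      ∘ₗ TensorProduct.mk k (H ⊗[k] (H ⊗[k] B)) _ phiInv ∘ₗ pre)

end Smash

/-!
Write `F₁₂ = F ⊗ 1`, `F₂₃ = 1 ⊗ F`, and let `Δ₁ = Δ ⊗ id`, `Δ₂ = id ⊗ Δ` act on `H ⊗ H`
(similarly `Δ₁, Δ₂, Δ₃` on `H ⊗ H ⊗ H`), so that `Φ_F = F₂₃ Δ₂(F) Φ Δ₁(F⁻¹) F₁₂⁻¹`.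
Since `Δ_F` is `Δ` followed by conjugation by `F`, each `Δᵢ` for `Δ_F` is the corresponding `Δᵢ`
for `Δ` conjugated by a leg of `F`. Hence `Φ_F` is invertible and quasi-coassociativity of `Δ_F`
reduces to that of `Δ` after telescoping cancellations. For the 3-cocycle identity both sides
become `F₃₄ F₂,₃₄ F₁,₂₃₄ · (the same side for Φ) · F₁₂₃,₄⁻¹ F₁₂,₃⁻¹ F₁₂⁻¹`: this uses how the legs
and the maps `Δᵢ` compose, that legs `12` and `34` commute, and that `Φ` intertwines `Δ₁ Δ` with
`Δ₂ Δ`, so that the legs of `Φ` can be moved past the `F`-factors. The counit conditions on `F` make every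
`F`-factor disappear under `id ⊗ ε ⊗ id`, which gives normalisation.
-/

section Monoid

variable {M : Type*} [Monoid M] {a b c d : M}

theorem mul_mul_eq_of_mul_eq_one (h : a * b = 1) (x : M) : a * (b * x) = x := by
  rw [← mul_assoc, h, one_mul]

theorem mul_mul_eq_mul_mul_of_mul_eq (h : a * b = c * d) (x : M) :
    a * (b * x) = c * (d * x) := by
  rw [← mul_assoc, h, mul_assoc]

theorem map_units_mul_mul_inv_of_map_eq_one {F N : Type*} [Monoid N] [FunLike F M N]
    [MonoidHomClass F M N] (φ : F) {u : Mˣ} (hu : φ u = 1) (x : M) :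
    φ (u * x * ↑u⁻¹) = φ x := by
  have hu' : φ ↑u⁻¹ = 1 := by simpa [hu] using map_mul_eq_one φ u.mul_inv
  rw [map_mul, map_mul, hu, hu', one_mul, mul_one]

/-- `map_mul_eq_one` for algebra maps: unlike the general lemma, this finds its instances when the
codomain is a fourfold tensor product. -/
theorem _root_.AlgHom.map_mul_eq_one_of_mul_eq_one {R B C : Type*} [CommSemiring R] [Semiring B]
    [Semiring C] [Algebra R B] [Algebra R C] (f : B →ₐ[R] C) {a b : B} (h : a * b = 1) :
    f a * f b = 1 :=
  map_mul_eq_one f h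

end Monoid

section TensorProduct

open Algebra.TensorProduct

variable {R : Type*} [CommSemiring R]
variable {B C D : Type*} [Semiring B] [Semiring C] [Semiring D]
  [Algebra R B] [Algebra R C] [Algebra R D]
variable {f g : C →ₐ[R] D}

theorem map_right_eq_includeRight_mul_mul {p q : D} (h : ∀ c, g c = p * f c * q)
    (w : B ⊗[R] C) :
    Algebra.TensorProduct.map (AlgHom.id R B) g w =
      includeRight p * Algebra.TensorProduct.map (AlgHom.id R B) f w * includeRight q := by
  induction w using TensorProduct.induction_on with
  | zero => simp
  | tmul b c => simp [h, tmul_mul_tmul]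
  | add x y hx hy => simp only [map_add, hx, hy, mul_add, add_mul]

theorem map_left_eq_includeLeft_mul_mul {p q : D} (h : ∀ c, g c = p * f c * q)
    (w : C ⊗[R] B) :
    Algebra.TensorProduct.map g (AlgHom.id R B) w =
      includeLeft (S := R) p * Algebra.TensorProduct.map f (AlgHom.id R B) w *
        includeLeft (S := R) q := by
  induction w using TensorProduct.induction_on with
  | zero => simp
  | tmul c b => simp [h, tmul_mul_tmul]
  | add x y hx hy => simp only [map_add, hx, hy, mul_add, add_mul]

theorem includeRight_mul_map_right {y : D} (h : ∀ c, y * f c = g c * y) (w : B ⊗[R] C) :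
    includeRight y * Algebra.TensorProduct.map (AlgHom.id R B) f w =
      Algebra.TensorProduct.map (AlgHom.id R B) g w * includeRight y := by
  induction w using TensorProduct.induction_on with
  | zero => simp
  | tmul b c => simp [h, tmul_mul_tmul]
  | add x y hx hy => simp only [map_add, hx, hy, mul_add, add_mul]

theorem map_left_mul_includeLeft {y : D} (h : ∀ c, f c * y = y * g c) (w : C ⊗[R] B) :
    Algebra.TensorProduct.map f (AlgHom.id R B) w * includeLeft (S := R) y =
      includeLeft (S := R) y * Algebra.TensorProduct.map g (AlgHom.id R B) w := by
  induction w using TensorProduct.induction_on with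
  | zero => simp
  | tmul c b => simp [h, tmul_mul_tmul]
  | add x y hx hy => simp only [map_add, hx, hy, mul_add, add_mul]

end TensorProduct

section Legs

open Algebra.TensorProduct

variable {R A : Type*} [CommSemiring R] [Semiring A] [Algebra R A]

def leg12 : A ⊗[R] A →ₐ[R] A ⊗[R] (A ⊗[R] A) :=
  Algebra.TensorProduct.map (AlgHom.id R A) includeLeft

def leg23 : A ⊗[R] A →ₐ[R] A ⊗[R] (A ⊗[R] A) := includeRight

variable (R A) in
def assoc₄ : (A ⊗[R] (A ⊗[R] A)) ⊗[R] A →ₐ[R] A ⊗[R] (A ⊗[R] (A ⊗[R] A)) :=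
  (Algebra.TensorProduct.map (AlgHom.id R A)
      (Algebra.TensorProduct.assoc R R R A A A).toAlgHom).comp
    (Algebra.TensorProduct.assoc R R R A (A ⊗[R] A) A).toAlgHom

def leg123 : A ⊗[R] (A ⊗[R] A) →ₐ[R] A ⊗[R] (A ⊗[R] (A ⊗[R] A)) :=
  (assoc₄ R A).comp includeLeft

def leg234 : A ⊗[R] (A ⊗[R] A) →ₐ[R] A ⊗[R] (A ⊗[R] (A ⊗[R] A)) := includeRight

@[simp]
theorem leg12_tmul (a b : A) : leg12 (a ⊗ₜ[R] b) = a ⊗ₜ (b ⊗ₜ 1) := rfl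

@[simp]
theorem leg23_apply (x : A ⊗[R] A) : leg23 x = 1 ⊗ₜ x := rfl

@[simp]
theorem leg234_apply (v : A ⊗[R] (A ⊗[R] A)) : leg234 v = 1 ⊗ₜ v := rfl

theorem assoc_tmul_one (x : A ⊗[R] A) :
    Algebra.TensorProduct.assoc R R R A A A (x ⊗ₜ 1) = leg12 x := by
  induction x using TensorProduct.induction_on with
  | zero => simp
  | tmul a b => rfl
  | add x y hx hy => simp only [TensorProduct.add_tmul, map_add, hx, hy]

@[simp]
theorem leg123_tmul (a : A) (v : A ⊗[R] A) : leg123 (a ⊗ₜ[R] v) = a ⊗ₜ leg12 v := by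
  simp [leg123, assoc₄, assoc_tmul_one]

theorem assoc_tmul_one_eq_leg123_leg12 (x : A ⊗[R] A) :
    Algebra.TensorProduct.assoc R R R A A (A ⊗[R] A) (x ⊗ₜ 1) = leg123 (leg12 x) := by
  induction x using TensorProduct.induction_on with
  | zero => simp
  | tmul a b => simp [one_def]
  | add x y hx hy => simp only [TensorProduct.add_tmul, map_add, hx, hy]

theorem assoc_one_tmul (y : A ⊗[R] A) :
    Algebra.TensorProduct.assoc R R R A A (A ⊗[R] A) (1 ⊗ₜ y) = leg234 (leg23 y) := rfl

theorem leg123_leg23 (x : A ⊗[R] A) : leg123 (leg23 x) = leg234 (leg12 x) := by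
  induction x using TensorProduct.induction_on with
  | zero => simp
  | tmul a b => simp
  | add x y hx hy => simp only [map_add, hx, hy]

theorem leg123_leg12_mul_leg234_leg23 (x y : A ⊗[R] A) :
    leg123 (leg12 x) * leg234 (leg23 y) = leg234 (leg23 y) * leg123 (leg12 x) := by
  have h : (x ⊗ₜ[R] (1 : A ⊗[R] A)) * (1 ⊗ₜ y) = (1 ⊗ₜ y) * (x ⊗ₜ 1) := by
    simp [tmul_mul_tmul]
  simpa only [map_mul, assoc_tmul_one_eq_leg123_leg12, assoc_one_tmul] using
    congrArg (Algebra.TensorProduct.assoc R R R A A (A ⊗[R] A)) h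

variable (Δ : A →ₐ[R] A ⊗[R] A)

def comulLeft : A ⊗[R] A →ₐ[R] A ⊗[R] (A ⊗[R] A) :=
  (Algebra.TensorProduct.assoc R R R A A A).toAlgHom.comp
    (Algebra.TensorProduct.map Δ (AlgHom.id R A))

def comulRight : A ⊗[R] A →ₐ[R] A ⊗[R] (A ⊗[R] A) :=
  Algebra.TensorProduct.map (AlgHom.id R A) Δ

def comulFirst : A ⊗[R] (A ⊗[R] A) →ₐ[R] A ⊗[R] (A ⊗[R] (A ⊗[R] A)) :=
  (Algebra.TensorProduct.assoc R R R A A (A ⊗[R] A)).toAlgHom.comp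
    (Algebra.TensorProduct.map Δ (AlgHom.id R (A ⊗[R] A)))

def comulMid : A ⊗[R] (A ⊗[R] A) →ₐ[R] A ⊗[R] (A ⊗[R] (A ⊗[R] A)) :=
  Algebra.TensorProduct.map (AlgHom.id R A) (comulLeft Δ)

def comulLast : A ⊗[R] (A ⊗[R] A) →ₐ[R] A ⊗[R] (A ⊗[R] (A ⊗[R] A)) :=
  Algebra.TensorProduct.map (AlgHom.id R A) (comulRight Δ)

theorem comulLeft_tmul (a b : A) :
    comulLeft Δ (a ⊗ₜ b) = Algebra.TensorProduct.assoc R R R A A A (Δ a ⊗ₜ b) := rfl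

@[simp]
theorem comulRight_tmul (a b : A) : comulRight Δ (a ⊗ₜ b) = a ⊗ₜ Δ b := rfl

theorem comulFirst_tmul (a : A) (v : A ⊗[R] A) :
    comulFirst Δ (a ⊗ₜ v) = Algebra.TensorProduct.assoc R R R A A (A ⊗[R] A) (Δ a ⊗ₜ v) := rfl

@[simp]
theorem comulMid_tmul (a : A) (v : A ⊗[R] A) : comulMid Δ (a ⊗ₜ v) = a ⊗ₜ comulLeft Δ v := rfl

@[simp]
theorem comulLast_tmul (a : A) (v : A ⊗[R] A) : comulLast Δ (a ⊗ₜ v) = a ⊗ₜ comulRight Δ v := rfl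

theorem comulLeft_tmul_one (a : A) : comulLeft Δ (a ⊗ₜ 1) = leg12 (Δ a) := by
  rw [comulLeft_tmul, assoc_tmul_one]

theorem comulMid_leg12 (x : A ⊗[R] A) : comulMid Δ (leg12 x) = leg123 (comulRight Δ x) := by
  induction x using TensorProduct.induction_on with
  | zero => simp
  | tmul a b => simp [comulLeft_tmul_one]
  | add x y hx hy => simp only [map_add, hx, hy]

theorem comulMid_leg23 (x : A ⊗[R] A) : comulMid Δ (leg23 x) = leg234 (comulLeft Δ x) := rfl

theorem comulFirst_leg12 (x : A ⊗[R] A) : comulFirst Δ (leg12 x) = leg123 (comulLeft Δ x) := by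
  induction x using TensorProduct.induction_on with
  | zero => simp
  | tmul a b =>
    rw [leg12_tmul, comulFirst_tmul, comulLeft_tmul]
    induction Δ a using TensorProduct.induction_on with
    | zero => simp
    | tmul p q => rfl
    | add x y hx hy => simp only [TensorProduct.add_tmul, map_add, hx, hy]
  | add x y hx hy => simp only [map_add, hx, hy]

theorem comulFirst_leg23 (x : A ⊗[R] A) : comulFirst Δ (leg23 x) = leg234 (leg23 x) := by
  simp [comulFirst, one_def]

theorem comulFirst_comulRight (x : A ⊗[R] A) :
    comulFirst Δ (comulRight Δ x) = comulLast Δ (comulLeft Δ x) := by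
  induction x using TensorProduct.induction_on with
  | zero => simp
  | tmul a b =>
    rw [comulRight_tmul, comulFirst_tmul, comulLeft_tmul]
    induction Δ a using TensorProduct.induction_on with
    | zero => simp
    | tmul p q => rfl
    | add x y hx hy => simp only [TensorProduct.add_tmul, map_add, hx, hy]
  | add x y hx hy => simp only [map_add, hx, hy]

theorem comulLast_leg23 (x : A ⊗[R] A) : comulLast Δ (leg23 x) = leg234 (comulRight Δ x) := rfl

theorem comulLast_leg12 (x : A ⊗[R] A) : comulLast Δ (leg12 x) = leg123 (leg12 x) := by
  induction x using TensorProduct.induction_on with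
  | zero => simp
  | tmul a b => simp [one_def]
  | add x y hx hy => simp only [map_add, hx, hy]

theorem comulMid_comulRight (x : A ⊗[R] A) :
    comulMid Δ (comulRight Δ x) =
      Algebra.TensorProduct.map (AlgHom.id R A) ((comulLeft Δ).comp Δ) x :=
  (AlgHom.congr_fun (map_id_comp _ _) x).symm

theorem comulLast_comulRight (x : A ⊗[R] A) :
    comulLast Δ (comulRight Δ x) =
      Algebra.TensorProduct.map (AlgHom.id R A) ((comulRight Δ).comp Δ) x :=
  (AlgHom.congr_fun (map_id_comp _ _) x).symm

theorem comulMid_comulLeft (x : A ⊗[R] A) :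
    comulMid Δ (comulLeft Δ x) =
      assoc₄ R A (Algebra.TensorProduct.map ((comulRight Δ).comp Δ) (AlgHom.id R A) x) := by
  induction x using TensorProduct.induction_on with
  | zero => simp
  | tmul a b =>
    rw [comulLeft_tmul, Algebra.TensorProduct.map_tmul, AlgHom.comp_apply, AlgHom.id_apply]
    induction Δ a using TensorProduct.induction_on with
    | zero => simp
    | tmul p q => rfl
    | add x y hx hy => simp only [TensorProduct.add_tmul, map_add, hx, hy]
  | add x y hx hy => simp only [map_add, hx, hy]

theorem comulFirst_comulLeft (x : A ⊗[R] A) :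
    comulFirst Δ (comulLeft Δ x) =
      assoc₄ R A (Algebra.TensorProduct.map ((comulLeft Δ).comp Δ) (AlgHom.id R A) x) := by
  induction x using TensorProduct.induction_on with
  | zero => simp
  | tmul a b =>
    rw [comulLeft_tmul, Algebra.TensorProduct.map_tmul, AlgHom.comp_apply, AlgHom.id_apply]
    induction Δ a using TensorProduct.induction_on with
    | zero => simp
    | tmul p q =>
      rw [Algebra.TensorProduct.assoc_tmul, comulFirst_tmul, comulLeft_tmul]
      induction Δ p using TensorProduct.induction_on with
      | zero => simp
      | tmul c d => rfl
      | add x y hx hy => simp only [TensorProduct.add_tmul, map_add, hx, hy]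
    | add x y hx hy => simp only [TensorProduct.add_tmul, map_add, hx, hy]
  | add x y hx hy => simp only [map_add, hx, hy]

def gaugeLeft₄ (x : A ⊗[R] A) : A ⊗[R] (A ⊗[R] (A ⊗[R] A)) :=
  leg234 (leg23 x) * leg234 (comulRight Δ x) * comulLast Δ (comulRight Δ x)

def gaugeRight₄ (x : A ⊗[R] A) : A ⊗[R] (A ⊗[R] (A ⊗[R] A)) :=
  comulFirst Δ (comulLeft Δ x) * leg123 (comulLeft Δ x) * leg123 (leg12 x)

section Twist

variable (u : (A ⊗[R] A)ˣ)

def twistComul : A →ₐ[R] A ⊗[R] A :=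
  (MulSemiringAction.toAlgHom R (A ⊗[R] A) (ConjAct.toConjAct u)).comp Δ

theorem twistComul_apply (a : A) : twistComul Δ u a = u * Δ a * ↑u⁻¹ := rfl

theorem comulRight_twistComul (x : A ⊗[R] A) :
    comulRight (twistComul Δ u) x = leg23 ↑u * comulRight Δ x * leg23 ↑u⁻¹ :=
  map_right_eq_includeRight_mul_mul (twistComul_apply Δ u) x

theorem comulLeft_twistComul (x : A ⊗[R] A) :
    comulLeft (twistComul Δ u) x = leg12 ↑u * comulLeft Δ x * leg12 ↑u⁻¹ := by
  rw [comulLeft, AlgHom.comp_apply, map_left_eq_includeLeft_mul_mul (twistComul_apply Δ u),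
    AlgEquiv.coe_toAlgHom, map_mul, map_mul, includeLeft_apply, includeLeft_apply,
    assoc_tmul_one, assoc_tmul_one]
  rfl

theorem comulFirst_twistComul (w : A ⊗[R] (A ⊗[R] A)) :
    comulFirst (twistComul Δ u) w =
      leg123 (leg12 ↑u) * comulFirst Δ w * leg123 (leg12 ↑u⁻¹) := by
  rw [comulFirst, AlgHom.comp_apply, map_left_eq_includeLeft_mul_mul (twistComul_apply Δ u),
    AlgEquiv.coe_toAlgHom, map_mul, map_mul, includeLeft_apply, includeLeft_apply,
    assoc_tmul_one_eq_leg123_leg12, assoc_tmul_one_eq_leg123_leg12]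
  rfl

theorem comulMid_twistComul (w : A ⊗[R] (A ⊗[R] A)) :
    comulMid (twistComul Δ u) w = leg234 (leg12 ↑u) * comulMid Δ w * leg234 (leg12 ↑u⁻¹) :=
  map_right_eq_includeRight_mul_mul (comulLeft_twistComul Δ u) w

theorem comulLast_twistComul (w : A ⊗[R] (A ⊗[R] A)) :
    comulLast (twistComul Δ u) w = leg234 (leg23 ↑u) * comulLast Δ w * leg234 (leg23 ↑u⁻¹) :=
  map_right_eq_includeRight_mul_mul (comulRight_twistComul Δ u) w

end Twist

section Counit

variable (ε : A →ₐ[R] R)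

def counitLeft : A ⊗[R] A →ₐ[R] A :=
  (Algebra.TensorProduct.lid R A).toAlgHom.comp (Algebra.TensorProduct.map ε (AlgHom.id R A))

def counitRight : A ⊗[R] A →ₐ[R] A :=
  (Algebra.TensorProduct.rid R R A).toAlgHom.comp (Algebra.TensorProduct.map (AlgHom.id R A) ε)

@[simp]
theorem counitLeft_tmul (a b : A) : counitLeft ε (a ⊗ₜ b) = ε a • b := rfl

@[simp]
theorem counitRight_tmul (a b : A) : counitRight ε (a ⊗ₜ b) = ε b • a := rfl

theorem map_counitLeft_leg12 (x : A ⊗[R] A) :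
    Algebra.TensorProduct.map (AlgHom.id R A) (counitLeft ε) (leg12 x) =
      counitRight ε x ⊗ₜ 1 := by
  induction x using TensorProduct.induction_on with
  | zero => simp
  | tmul a b => simp [TensorProduct.smul_tmul]
  | add x y hx hy => simp only [map_add, hx, hy, TensorProduct.add_tmul]

theorem map_counitLeft_leg23 (x : A ⊗[R] A) :
    Algebra.TensorProduct.map (AlgHom.id R A) (counitLeft ε) (leg23 x) =
      1 ⊗ₜ counitLeft ε x := by
  simp

theorem map_counitLeft_comulRight (h : ∀ a, counitLeft ε (Δ a) = a) (x : A ⊗[R] A) :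
    Algebra.TensorProduct.map (AlgHom.id R A) (counitLeft ε) (comulRight Δ x) = x := by
  induction x using TensorProduct.induction_on with
  | zero => simp
  | tmul a b => simp [h]
  | add x y hx hy => simp only [map_add, hx, hy]

theorem map_counitLeft_comulLeft (h : ∀ a, counitRight ε (Δ a) = a) (x : A ⊗[R] A) :
    Algebra.TensorProduct.map (AlgHom.id R A) (counitLeft ε) (comulLeft Δ x) = x := by
  induction x using TensorProduct.induction_on with
  | zero => simp
  | tmul a b =>
    rw [comulLeft_tmul]
    conv_rhs => rw [← h a]
    induction Δ a using TensorProduct.induction_on with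
    | zero => simp
    | tmul p q => simp [TensorProduct.smul_tmul]
    | add x y hx hy => simp only [TensorProduct.add_tmul, map_add, hx, hy]
  | add x y hx hy => simp only [map_add, hx, hy]

end Counit

end Legs

namespace QuasiBialgebra

open Algebra.TensorProduct

-- The rewrites below name this monoid explicitly: `rw` and `simp` fail to unify a generic
-- `Monoid` instance with the multiplication of a fourfold tensor product.
local notation "H⁴" => H ⊗[k] (H ⊗[k] (H ⊗[k] H))

theorem comulRight_comul_mul_Phi (h : H) :
    comulRight Q.comul (Q.comul h) * Q.Phi = Q.Phi * comulLeft Q.comul (Q.comul h) := by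
  have hq : comulRight Q.comul (Q.comul h) = Q.Phi * comulLeft Q.comul (Q.comul h) * Q.PhiInv :=
    Q.quasi_coassoc h
  rw [hq, mul_assoc, Q.inv_Phi_mul, mul_one]

theorem cocycle_legs :
    leg234 Q.Phi * comulMid Q.comul Q.Phi * leg123 Q.Phi =
      comulLast Q.comul Q.Phi * comulFirst Q.comul Q.Phi :=
  Q.cocycle

theorem leg234_Phi_mul_comulMid_comulRight (x : H ⊗[k] H) :
    leg234 Q.Phi * comulMid Q.comul (comulRight Q.comul x) =
      comulLast Q.comul (comulRight Q.comul x) * leg234 Q.Phi := by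
  rw [comulMid_comulRight, comulLast_comulRight]
  exact includeRight_mul_map_right (fun c => (Q.comulRight_comul_mul_Phi c).symm) x

theorem comulMid_comulLeft_mul_leg123_Phi (x : H ⊗[k] H) :
    comulMid Q.comul (comulLeft Q.comul x) * leg123 Q.Phi =
      leg123 Q.Phi * comulFirst Q.comul (comulLeft Q.comul x) := by
  rw [comulMid_comulLeft, comulFirst_comulLeft,
    show leg123 Q.Phi = assoc₄ k H (includeLeft (S := k) Q.Phi) from rfl, ← map_mul, ← map_mul,
    map_left_mul_includeLeft (g := (comulLeft Q.comul).comp Q.comul) Q.comulRight_comul_mul_Phi]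

variable (u : (H ⊗[k] H)ˣ)

def twistPhi : H ⊗[k] (H ⊗[k] H) :=
  leg23 ↑u * comulRight Q.comul ↑u * Q.Phi * comulLeft Q.comul ↑u⁻¹ * leg12 ↑u⁻¹

def twistPhiInv : H ⊗[k] (H ⊗[k] H) :=
  leg12 ↑u * comulLeft Q.comul ↑u * Q.PhiInv * comulRight Q.comul ↑u⁻¹ * leg23 ↑u⁻¹

theorem twistPhi_mul_twistPhiInv : Q.twistPhi u * Q.twistPhiInv u = 1 := by
  simp only [twistPhi, twistPhiInv, mul_assoc]
  rw [mul_mul_eq_of_mul_eq_one (map_mul_eq_one leg12 u.inv_mul),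
    mul_mul_eq_of_mul_eq_one (map_mul_eq_one (comulLeft Q.comul) u.inv_mul),
    mul_mul_eq_of_mul_eq_one Q.Phi_inv_mul,
    mul_mul_eq_of_mul_eq_one (map_mul_eq_one (comulRight Q.comul) u.mul_inv),
    map_mul_eq_one leg23 u.mul_inv]

theorem twistPhiInv_mul_twistPhi : Q.twistPhiInv u * Q.twistPhi u = 1 := by
  simp only [twistPhi, twistPhiInv, mul_assoc]
  rw [mul_mul_eq_of_mul_eq_one (map_mul_eq_one leg23 u.inv_mul),
    mul_mul_eq_of_mul_eq_one (map_mul_eq_one (comulRight Q.comul) u.inv_mul),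
    mul_mul_eq_of_mul_eq_one Q.inv_Phi_mul,
    mul_mul_eq_of_mul_eq_one (map_mul_eq_one (comulLeft Q.comul) u.mul_inv),
    map_mul_eq_one leg12 u.mul_inv]

theorem comulRight_twistComul_twistComul (h : H) :
    comulRight (twistComul Q.comul u) (twistComul Q.comul u h) =
      Q.twistPhi u * comulLeft (twistComul Q.comul u) (twistComul Q.comul u h) *
        Q.twistPhiInv u := by
  rw [comulRight_twistComul, comulLeft_twistComul, twistComul_apply]
  simp only [map_mul, twistPhi, twistPhiInv, mul_assoc]
  rw [mul_mul_eq_of_mul_eq_one (map_mul_eq_one leg12 u.inv_mul),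
    mul_mul_eq_of_mul_eq_one (map_mul_eq_one (comulLeft Q.comul) u.inv_mul),
    mul_mul_eq_of_mul_eq_one (map_mul_eq_one leg12 u.inv_mul),
    mul_mul_eq_of_mul_eq_one (map_mul_eq_one (comulLeft Q.comul) u.inv_mul),
    ← mul_mul_eq_mul_mul_of_mul_eq (Q.comulRight_comul_mul_Phi h),
    mul_mul_eq_of_mul_eq_one Q.Phi_inv_mul]

theorem map_counitLeft_twistPhi (hl : counitLeft Q.counit ↑u = 1)
    (hr : counitRight Q.counit ↑u = 1) :
    Algebra.TensorProduct.map (AlgHom.id k H) (counitLeft Q.counit) (Q.twistPhi u) = 1 := by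
  have hr' : counitRight Q.counit ↑u⁻¹ = 1 := by
    simpa [hr] using map_mul_eq_one (counitRight Q.counit) u.mul_inv
  have hΦ : Algebra.TensorProduct.map (AlgHom.id k H) (counitLeft Q.counit) Q.Phi = 1 :=
    Q.normalized
  simp only [twistPhi, map_mul, map_counitLeft_leg23, map_counitLeft_leg12,
    map_counitLeft_comulRight _ _ Q.counit_left, map_counitLeft_comulLeft _ _ Q.counit_right,
    hl, hr', hΦ, ← one_def, one_mul, mul_one, u.mul_inv]

theorem twistPhi_cocycle_lhs :
    leg234 (Q.twistPhi u) * comulMid (twistComul Q.comul u) (Q.twistPhi u) *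
        leg123 (Q.twistPhi u) =
      gaugeLeft₄ Q.comul ↑u * (leg234 Q.Phi * comulMid Q.comul Q.Phi * leg123 Q.Phi) *
        gaugeRight₄ Q.comul ↑u⁻¹ := by
  rw [comulMid_twistComul]
  simp only [twistPhi, map_mul, comulMid_leg12, comulMid_leg23, leg123_leg23, gaugeLeft₄,
    gaugeRight₄, mul_assoc (G := H⁴)]
  rw [mul_mul_eq_of_mul_eq_one (M := H⁴)
      (AlgHom.map_mul_eq_one_of_mul_eq_one leg234 (map_mul_eq_one leg12 u.inv_mul)),
    mul_mul_eq_of_mul_eq_one (M := H⁴)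
      (AlgHom.map_mul_eq_one_of_mul_eq_one leg234 (map_mul_eq_one (comulLeft Q.comul) u.inv_mul)),
    mul_mul_eq_mul_mul_of_mul_eq (M := H⁴) (Q.leg234_Phi_mul_comulMid_comulRight ↑u),
    mul_mul_eq_of_mul_eq_one (M := H⁴)
      (AlgHom.map_mul_eq_one_of_mul_eq_one leg234 (map_mul_eq_one leg12 u.inv_mul)),
    mul_mul_eq_of_mul_eq_one (M := H⁴)
      (AlgHom.map_mul_eq_one_of_mul_eq_one leg123 (map_mul_eq_one (comulRight Q.comul) u.inv_mul)),
    mul_mul_eq_mul_mul_of_mul_eq (M := H⁴) (Q.comulMid_comulLeft_mul_leg123_Phi ↑u⁻¹)]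

theorem twistPhi_cocycle_rhs :
    comulLast (twistComul Q.comul u) (Q.twistPhi u) *
        comulFirst (twistComul Q.comul u) (Q.twistPhi u) =
      gaugeLeft₄ Q.comul ↑u * (comulLast Q.comul Q.Phi * comulFirst Q.comul Q.Phi) *
        gaugeRight₄ Q.comul ↑u⁻¹ := by
  rw [comulLast_twistComul, comulFirst_twistComul]
  simp only [twistPhi, map_mul, comulLast_leg23, comulLast_leg12, comulFirst_leg23,
    comulFirst_leg12, comulFirst_comulRight, gaugeLeft₄, gaugeRight₄, mul_assoc (G := H⁴)]
  rw [← mul_mul_eq_mul_mul_of_mul_eq (M := H⁴) (leg123_leg12_mul_leg234_leg23 ↑u ↑u⁻¹),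
    mul_mul_eq_of_mul_eq_one (M := H⁴)
      (AlgHom.map_mul_eq_one_of_mul_eq_one leg123 (map_mul_eq_one leg12 u.inv_mul)),
    mul_mul_eq_of_mul_eq_one (M := H⁴)
      (AlgHom.map_mul_eq_one_of_mul_eq_one leg234 (map_mul_eq_one leg23 u.inv_mul)),
    mul_mul_eq_of_mul_eq_one (M := H⁴)
      (AlgHom.map_mul_eq_one_of_mul_eq_one (comulLast Q.comul)
        (map_mul_eq_one (comulLeft Q.comul) u.inv_mul))]

theorem twistPhi_cocycle :
    leg234 (Q.twistPhi u) * comulMid (twistComul Q.comul u) (Q.twistPhi u) *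
        leg123 (Q.twistPhi u) =
      comulLast (twistComul Q.comul u) (Q.twistPhi u) *
        comulFirst (twistComul Q.comul u) (Q.twistPhi u) := by
  rw [twistPhi_cocycle_lhs, twistPhi_cocycle_rhs, cocycle_legs]

def twist (hl : counitLeft Q.counit ↑u = 1) (hr : counitRight Q.counit ↑u = 1) :
    QuasiBialgebra k H where
  comul := twistComul Q.comul u
  counit := Q.counit
  Phi := Q.twistPhi u
  PhiInv := Q.twistPhiInv u
  Phi_inv_mul := Q.twistPhi_mul_twistPhiInv u
  inv_Phi_mul := Q.twistPhiInv_mul_twistPhi u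
  quasi_coassoc := Q.comulRight_twistComul_twistComul u
  counit_right h := by
    show counitRight Q.counit (twistComul Q.comul u h) = h
    rw [twistComul_apply, map_units_mul_mul_inv_of_map_eq_one _ hr]
    exact Q.counit_right h
  counit_left h := by
    show counitLeft Q.counit (twistComul Q.comul u h) = h
    rw [twistComul_apply, map_units_mul_mul_inv_of_map_eq_one _ hl]
    exact Q.counit_left h
  cocycle := Q.twistPhi_cocycle u
  normalized := Q.map_counitLeft_twistPhi u hl hr

end QuasiBialgebra

/-- twisting a quasi-bialgebra by a gauge transformation `F`
again yields a quasi-bialgebra, with `Δ_F(h) = F Δ(h) F⁻¹` and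
`Φ_F = (1⊗F)(id⊗Δ)(F) Φ (Δ⊗id)(F⁻¹)(F⁻¹⊗1)`. -/
theorem twist_quasiBialgebra
    {k : Type} [Field k] {H : Type} [Ring H] [Algebra k H]
    (Q : QuasiBialgebra k H) (F Finv : H ⊗[k] H)
    (hF : F * Finv = 1) (hFi : Finv * F = 1)
    (hcl : (Algebra.TensorProduct.lid k H)
        (Algebra.TensorProduct.map Q.counit (AlgHom.id k H) F) = 1)
    (hcr : (Algebra.TensorProduct.rid k k H)
        (Algebra.TensorProduct.map (AlgHom.id k H) Q.counit F) = 1) :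
    ∃ Q' : QuasiBialgebra k H,
      Q'.counit = Q.counit ∧
      (∀ h : H, Q'.comul h = F * Q.comul h * Finv) ∧
      Q'.Phi =
        (Algebra.TensorProduct.includeRight (R := k) (A := H) (B := H ⊗[k] H) F)
          * (Algebra.TensorProduct.map (AlgHom.id k H) Q.comul F)
          * Q.Phi
          * ((Algebra.TensorProduct.assoc k k k H H H)
              (Algebra.TensorProduct.map Q.comul (AlgHom.id k H) Finv))
          * ((Algebra.TensorProduct.assoc k k k H H H) (Finv ⊗ₜ[k] (1 : H))) := by
  let u : (H ⊗[k] H)ˣ := ⟨F, Finv, hF, hFi⟩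
  refine ⟨Q.twist u hcl hcr, rfl, fun h => rfl, ?_⟩
  rw [assoc_tmul_one]
  rfl

end QuasiHopfPaper
end
end

section
/- For a quasi-Hopf algebra H and a left H-comodule algebra B, λ(b_{[0]}) p̃_λ [S⁻¹(b_{[-1]})⊗1_B] = p̃_λ [1_H⊗b] and [S(b_{[-1]})⊗1] q̃_λ λ(b_{[0]}) = [1⊗b] q̃_λ for all b ∈ B. -/
open TensorProduct

noncomputable section

namespace QuasiHopfPaper

variable (k : Type) [Field k]
variable (H : Type) [Ring H] [Algebra k H]

variable {k H}

variable (Q : QuasiBialgebra k H)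

set_option maxHeartbeats 1000000

section PQ

variable {k : Type} [Field k] {H : Type} [Ring H] [Algebra k H]
variable {B : Type} [Ring B] [Algebra k B]

/-- `p̃_λ = X̃²_λ S⁻¹(X̃¹_λ β) ⊗ X̃³_λ`, extracted from `w = Φ_λ`. -/
def pElt (Sinv : H →ₗ[k] H) (β : H) (w : H ⊗[k] (H ⊗[k] B)) : H ⊗[k] B :=
  (TensorProduct.map
      ((LinearMap.mul' k H) ∘ₗ (TensorProduct.comm k H H).toLinearMap
        ∘ₗ TensorProduct.map (Sinv ∘ₗ LinearMap.mulRight k β) LinearMap.id)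
      LinearMap.id)
    ((TensorProduct.assoc k H H B).symm w)

/-- `q̃_λ = S(x̃¹_λ) α x̃²_λ ⊗ x̃³_λ`, extracted from `w = Φ_λ⁻¹`. -/
def qElt (S : H →ₗ[k] H) (α : H) (w : H ⊗[k] (H ⊗[k] B)) : H ⊗[k] B :=
  (TensorProduct.map
      ((LinearMap.mul' k H) ∘ₗ TensorProduct.map S (LinearMap.mulLeft k α))
      LinearMap.id)
    ((TensorProduct.assoc k H H B).symm w)

/-- The bilinear map `(x', w) ↦ (w * p) * (x' ⊗ 1)` in `H ⊗ B`. -/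
def conjR (p : H ⊗[k] B) : H →ₗ[k] (H ⊗[k] B) →ₗ[k] (H ⊗[k] B) :=
  ((LinearMap.llcomp k (H ⊗[k] B) (H ⊗[k] B) (H ⊗[k] B)).flip
      (LinearMap.mulRight k p))
    ∘ₗ ((LinearMap.mul k (H ⊗[k] B)).flip ∘ₗ (TensorProduct.mk k H B).flip 1)

/-- The bilinear map `(x', w) ↦ ((x' ⊗ 1) * q) * w` in `H ⊗ B`. -/
def conjL (q : H ⊗[k] B) : H →ₗ[k] (H ⊗[k] B) →ₗ[k] (H ⊗[k] B) :=
  (LinearMap.mul k (H ⊗[k] B)) ∘ₗ (LinearMap.mulRight k q)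
    ∘ₗ (TensorProduct.mk k H B).flip 1

end PQ

/-!
The elements `p̃_λ` and `q̃_λ` are the images of `Φ_λ` and `Φ_λ⁻¹` under the linear maps
`h ⊗ z ↦ z (S⁻¹(hβ) ⊗ 1)` and `h ⊗ z ↦ (S(h)α ⊗ 1) z`. These maps turn multiplication by
`h ⊗ z` on the left (resp. right) into the twisted products of the two identities, so their
left-hand sides are the images of `(id ⊗ λ)(λ b) Φ_λ` and `Φ_λ⁻¹ (id ⊗ λ)(λ b)`.
Quasi-coassociativity of `λ` rewrites these as `Φ_λ (Δ ⊗ id)(λ b)` and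
`(Δ ⊗ id)(λ b) Φ_λ⁻¹`, and the antipode axioms `h₁ β S(h₂) = ε(h) β` and
`S(h₁) α h₂ = ε(h) α` collapse `(Δ ⊗ id)(λ b)` to `1 ⊗ b`.
-/

section Development

variable {k : Type} [Field k] {H : Type} [Ring H] [Algebra k H]
variable {B : Type} [Ring B] [Algebra k B]

theorem map_mul_of_inverse_antimul {S Sinv : H →ₗ[k] H}
    (hanti : ∀ a b : H, S (a * b) = S b * S a)
    (hinv₁ : ∀ h : H, Sinv (S h) = h) (hinv₂ : ∀ h : H, S (Sinv h) = h) (a b : H) :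
    Sinv (a * b) = Sinv b * Sinv a := by
  conv_lhs => rw [← hinv₂ a, ← hinv₂ b, ← hanti]
  exact hinv₁ _

/-- `h₂ S⁻¹(h₁ β) = ε(h) S⁻¹(β)`, the image of `h₁ β S(h₂) = ε(h) β` under `S⁻¹`. -/
theorem IsAntipode.inv_right_id {Q : QuasiBialgebra k H} {S Sinv : H →ₗ[k] H}
    {α β : H} (hS : IsAntipode Q S α β) (hinv₁ : ∀ h : H, Sinv (S h) = h)
    (hinv₂ : ∀ h : H, S (Sinv h) = h) (h : H) :
    TensorProduct.lift ((LinearMap.mul k H).flip ∘ₗ Sinv ∘ₗ LinearMap.mulRight k β)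
        (Q.comul h) = Q.counit h • Sinv β := by
  have hSinv := map_mul_of_inverse_antimul hS.anti_mul hinv₁ hinv₂
  have key : ∀ d : H ⊗[k] H,
      TensorProduct.lift ((LinearMap.mul k H).flip ∘ₗ Sinv ∘ₗ LinearMap.mulRight k β) d
        = Sinv (LinearMap.mul' k H (TensorProduct.map (LinearMap.mulRight k β) S d)) := by
    intro d
    induction d using TensorProduct.induction_on with
    | zero => simp
    | tmul a b => simp [hSinv, hinv₁]
    | add d₁ d₂ h₁ h₂ => simp only [map_add, h₁, h₂]
  rw [key, hS.right_id, map_smul]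

def pMap (Sinv : H →ₗ[k] H) (β : H) : H ⊗[k] (H ⊗[k] B) →ₗ[k] H ⊗[k] B :=
  TensorProduct.lift ((LinearMap.mul k (H ⊗[k] B)).flip
    ∘ₗ (TensorProduct.mk k H B).flip 1 ∘ₗ Sinv ∘ₗ LinearMap.mulRight k β)

def qMap (S : H →ₗ[k] H) (α : H) : H ⊗[k] (H ⊗[k] B) →ₗ[k] H ⊗[k] B :=
  TensorProduct.lift (LinearMap.mul k (H ⊗[k] B)
    ∘ₗ (TensorProduct.mk k H B).flip 1 ∘ₗ LinearMap.mulRight k α ∘ₗ S)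

@[simp] theorem pMap_tmul (Sinv : H →ₗ[k] H) (β h : H) (z : H ⊗[k] B) :
    pMap Sinv β (h ⊗ₜ z) = z * (Sinv (h * β) ⊗ₜ 1) := by
  simp [pMap]

@[simp] theorem qMap_tmul (S : H →ₗ[k] H) (α h : H) (z : H ⊗[k] B) :
    qMap S α (h ⊗ₜ z) = (S h * α) ⊗ₜ 1 * z := by
  simp [qMap]

theorem pElt_eq_pMap (Sinv : H →ₗ[k] H) (β : H) (w : H ⊗[k] (H ⊗[k] B)) :
    pElt Sinv β w = pMap Sinv β w := by
  induction w using TensorProduct.induction_on with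
  | zero => simp [pElt]
  | tmul h z =>
    induction z using TensorProduct.induction_on with
    | zero => simp [pElt]
    | tmul g c => simp [pElt]
    | add z₁ z₂ h₁ h₂ => simp_all [pElt, TensorProduct.tmul_add]
  | add w₁ w₂ h₁ h₂ => simp_all [pElt]

theorem qElt_eq_qMap (S : H →ₗ[k] H) (α : H) (w : H ⊗[k] (H ⊗[k] B)) :
    qElt S α w = qMap S α w := by
  induction w using TensorProduct.induction_on with
  | zero => simp [qElt]
  | tmul h z =>
    induction z using TensorProduct.induction_on with
    | zero => simp [qElt]
    | tmul g c => simp [qElt, mul_assoc]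
    | add z₁ z₂ h₁ h₂ => simp_all [qElt, TensorProduct.tmul_add]
  | add w₁ w₂ h₁ h₂ => simp_all [qElt]

theorem pMap_tmul_mul {Sinv : H →ₗ[k] H} (β : H)
    (hanti : ∀ a b : H, Sinv (a * b) = Sinv b * Sinv a)
    (h : H) (z : H ⊗[k] B) (w : H ⊗[k] (H ⊗[k] B)) :
    pMap Sinv β (h ⊗ₜ z * w) = z * pMap Sinv β w * (Sinv h ⊗ₜ 1) := by
  induction w using TensorProduct.induction_on with
  | zero => simp
  | tmul g y => simp [hanti, mul_assoc]
  | add w₁ w₂ h₁ h₂ => simp only [mul_add, add_mul, map_add, h₁, h₂]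

theorem qMap_mul_tmul {S : H →ₗ[k] H} (α : H)
    (hanti : ∀ a b : H, S (a * b) = S b * S a)
    (w : H ⊗[k] (H ⊗[k] B)) (h : H) (z : H ⊗[k] B) :
    qMap S α (w * h ⊗ₜ z) = S h ⊗ₜ 1 * qMap S α w * z := by
  induction w using TensorProduct.induction_on with
  | zero => simp
  | tmul g y => simp [hanti, ← mul_assoc]
  | add w₁ w₂ h₁ h₂ => simp only [mul_add, add_mul, map_add, h₁, h₂]

theorem lift_conjR_pMap {Sinv : H →ₗ[k] H} (β : H)
    (hanti : ∀ a b : H, Sinv (a * b) = Sinv b * Sinv a)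
    (w v : H ⊗[k] (H ⊗[k] B)) :
    TensorProduct.lift (conjR (pMap Sinv β w)) (TensorProduct.map Sinv LinearMap.id v)
      = pMap Sinv β (v * w) := by
  induction v using TensorProduct.induction_on with
  | zero => simp
  | tmul h z => simp [conjR, pMap_tmul_mul β hanti]
  | add v₁ v₂ h₁ h₂ => simp only [add_mul, map_add, h₁, h₂]

theorem lift_conjL_qMap {S : H →ₗ[k] H} (α : H)
    (hanti : ∀ a b : H, S (a * b) = S b * S a)
    (w v : H ⊗[k] (H ⊗[k] B)) :
    TensorProduct.lift (conjL (qMap S α w)) (TensorProduct.map S LinearMap.id v)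
      = qMap S α (w * v) := by
  induction v using TensorProduct.induction_on with
  | zero => simp
  | tmul h z => simp [conjL, qMap_mul_tmul α hanti]
  | add v₁ v₂ h₁ h₂ => simp only [mul_add, map_add, h₁, h₂]

variable {Q : QuasiBialgebra k H} {S Sinv : H →ₗ[k] H} {α β : H}

theorem pMap_assoc_comul (hS : IsAntipode Q S α β) (hinv₁ : ∀ h : H, Sinv (S h) = h)
    (hinv₂ : ∀ h : H, S (Sinv h) = h) (u : H ⊗[k] B) :
    pMap Sinv β (Algebra.TensorProduct.assoc k k k H H B
        (Algebra.TensorProduct.map Q.comul (AlgHom.id k B) u))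
      = Sinv β ⊗ₜ Algebra.TensorProduct.lid k B
          (Algebra.TensorProduct.map Q.counit (AlgHom.id k B) u) := by
  have hcomul : ∀ (d : H ⊗[k] H) (c : B),
      pMap Sinv β (Algebra.TensorProduct.assoc k k k H H B (d ⊗ₜ c))
        = TensorProduct.lift ((LinearMap.mul k H).flip ∘ₗ Sinv ∘ₗ LinearMap.mulRight k β) d
            ⊗ₜ c := by
    intro d c
    induction d using TensorProduct.induction_on with
    | zero => simp
    | tmul a b => simp
    | add d₁ d₂ h₁ h₂ => simp only [TensorProduct.add_tmul, map_add, h₁, h₂]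
  induction u using TensorProduct.induction_on with
  | zero => simp
  | tmul h c =>
    simp [hcomul, hS.inv_right_id hinv₁ hinv₂, TensorProduct.smul_tmul]
  | add u₁ u₂ h₁ h₂ => simp only [map_add, TensorProduct.tmul_add, h₁, h₂]

theorem qMap_assoc_comul (hS : IsAntipode Q S α β) (u : H ⊗[k] B) :
    qMap S α (Algebra.TensorProduct.assoc k k k H H B
        (Algebra.TensorProduct.map Q.comul (AlgHom.id k B) u))
      = α ⊗ₜ Algebra.TensorProduct.lid k B
          (Algebra.TensorProduct.map Q.counit (AlgHom.id k B) u) := by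
  have hcomul : ∀ (d : H ⊗[k] H) (c : B),
      qMap S α (Algebra.TensorProduct.assoc k k k H H B (d ⊗ₜ c))
        = LinearMap.mul' k H (TensorProduct.map S (LinearMap.mulLeft k α) d) ⊗ₜ c := by
    intro d c
    induction d using TensorProduct.induction_on with
    | zero => simp
    | tmul a b => simp [mul_assoc]
    | add d₁ d₂ h₁ h₂ => simp only [TensorProduct.add_tmul, map_add, h₁, h₂]
  induction u using TensorProduct.induction_on with
  | zero => simp
  | tmul h c => simp [hcomul, hS.left_id, TensorProduct.smul_tmul]
  | add u₁ u₂ h₁ h₂ => simp only [map_add, TensorProduct.tmul_add, h₁, h₂]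

theorem pMap_mul_assoc_comul (hS : IsAntipode Q S α β) (hinv₁ : ∀ h : H, Sinv (S h) = h)
    (hinv₂ : ∀ h : H, S (Sinv h) = h) (w : H ⊗[k] (H ⊗[k] B)) (u : H ⊗[k] B) :
    pMap Sinv β (w * Algebra.TensorProduct.assoc k k k H H B
        (Algebra.TensorProduct.map Q.comul (AlgHom.id k B) u))
      = pMap Sinv β w * (1 ⊗ₜ Algebra.TensorProduct.lid k B
          (Algebra.TensorProduct.map Q.counit (AlgHom.id k B) u)) := by
  have hSinv := map_mul_of_inverse_antimul hS.anti_mul hinv₁ hinv₂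
  induction w using TensorProduct.induction_on with
  | zero => simp
  | tmul h z =>
    simp [pMap_tmul_mul β hSinv, pMap_assoc_comul hS hinv₁ hinv₂, hSinv, mul_assoc]
  | add w₁ w₂ h₁ h₂ => simp only [add_mul, map_add, h₁, h₂]

theorem qMap_assoc_comul_mul (hS : IsAntipode Q S α β) (u : H ⊗[k] B)
    (w : H ⊗[k] (H ⊗[k] B)) :
    qMap S α (Algebra.TensorProduct.assoc k k k H H B
        (Algebra.TensorProduct.map Q.comul (AlgHom.id k B) u) * w)
      = 1 ⊗ₜ Algebra.TensorProduct.lid k B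
          (Algebra.TensorProduct.map Q.counit (AlgHom.id k B) u) * qMap S α w := by
  induction w using TensorProduct.induction_on with
  | zero => simp
  | tmul h z => simp [qMap_mul_tmul α hS.anti_mul, qMap_assoc_comul hS, ← mul_assoc]
  | add w₁ w₂ h₁ h₂ => simp only [mul_add, map_add, h₁, h₂]

theorem LeftComoduleAlgebra.phiInv_mul_coassoc (L : LeftComoduleAlgebra Q B) (b : B) :
    L.PhiInv * Algebra.TensorProduct.map (AlgHom.id k H) L.lambda (L.lambda b)
      = Algebra.TensorProduct.assoc k k k H H B
          (Algebra.TensorProduct.map Q.comul (AlgHom.id k B) (L.lambda b)) * L.PhiInv :=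
  let Φ : (H ⊗[k] (H ⊗[k] B))ˣ := ⟨L.Phi, L.PhiInv, L.Phi_inv_mul, L.inv_Phi_mul⟩
  SemiconjBy.units_inv_symm_left (a := Φ) (L.coassoc b).symm

theorem map_toLinearMap_eq_map_map (f : H →ₗ[k] H) (lam : B →ₐ[k] H ⊗[k] B)
    (u : H ⊗[k] B) :
    TensorProduct.map f lam.toLinearMap u
      = TensorProduct.map f LinearMap.id (Algebra.TensorProduct.map (AlgHom.id k H) lam u) := by
  induction u using TensorProduct.induction_on with
  | zero => simp
  | tmul h c => simp
  | add u₁ u₂ h₁ h₂ => simp only [map_add, h₁, h₂]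

end Development

/-- STATEMENT 5: `λ(b₀) p̃_λ [S⁻¹(b₋₁) ⊗ 1] = p̃_λ [1 ⊗ b]` and
`[S(b₋₁) ⊗ 1] q̃_λ λ(b₀) = [1 ⊗ b] q̃_λ` for all `b ∈ B`. -/
theorem pq_coaction_identities
    {k : Type} [Field k] {H : Type} [Ring H] [Algebra k H]
    {B : Type} [Ring B] [Algebra k B]
    (Q : QuasiBialgebra k H) (S Sinv : H →ₗ[k] H) (α β : H)
    (hS : IsAntipode Q S α β)
    (hinv₁ : ∀ h : H, Sinv (S h) = h) (hinv₂ : ∀ h : H, S (Sinv h) = h)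
    (L : LeftComoduleAlgebra Q B) :
    ∀ b : B,
      (TensorProduct.lift (conjR (pElt Sinv β L.Phi)))
          ((TensorProduct.map Sinv L.lambda.toLinearMap) (L.lambda b))
        = pElt Sinv β L.Phi * ((1 : H) ⊗ₜ[k] b)
      ∧ (TensorProduct.lift (conjL (qElt S α L.PhiInv)))
          ((TensorProduct.map S L.lambda.toLinearMap) (L.lambda b))
        = ((1 : H) ⊗ₜ[k] b) * qElt S α L.PhiInv := by
  intro b
  have hSinv := map_mul_of_inverse_antimul hS.anti_mul hinv₁ hinv₂
  simp only [map_toLinearMap_eq_map_map, pElt_eq_pMap, qElt_eq_qMap]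
  constructor
  · rw [lift_conjR_pMap β hSinv, L.coassoc, pMap_mul_assoc_comul hS hinv₁ hinv₂,
      L.counit_lambda]
  · rw [lift_conjL_qMap α hS.anti_mul, L.phiInv_mul_coassoc, qMap_assoc_comul_mul hS,
      L.counit_lambda]

end QuasiHopfPaper
end
end
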